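/- Let p be a continuously differentiable, strictly positive probability density on ℝ^d and f : ℝ^d → ℝ twice continuously differentiable. Assume the vector field p·∇f is integrable, its flux over spheres of radius R vanishes as R → ∞, and L_p f is integrable under p. Then E_{X∼p}[L_p f(X)] = 0. -/

import Mathlib

open MeasureTheory Real Finset Filter

noncomputable section

def basisVec {d : ℕ} (i : Fin d) : EuclideanSpace ℝ (Fin d) := EuclideanSpace.single i 1

def pderiv' {d : ℕ} (i : Fin d) (f : EuclideanSpace ℝ (Fin d) → ℝ)
    (x : EuclideanSpace ℝ (Fin d)) : ℝ := fderiv ℝ f x (basisVec i)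

def laplacian' {d : ℕ} (f : EuclideanSpace ℝ (Fin d) → ℝ)
    (x : EuclideanSpace ℝ (Fin d)) : ℝ := ∑ i, pderiv' i (pderiv' i f) x

/-- Langevin Stein operator `L_p f = Δf + ∇log p · ∇f`. -/
def steinOp {d : ℕ} (p f : EuclideanSpace ℝ (Fin d) → ℝ)
    (x : EuclideanSpace ℝ (Fin d)) : ℝ :=
  laplacian' f x + ∑ i, pderiv' i (fun y => Real.log (p y)) x * pderiv' i f x

/-! Since `p · L_p f = div (p ∇f)`, the claim is that the divergence of an integrable vector
field integrates to zero whenever it is integrable. On the cube `[-R, R]^d` the divergence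
theorem bounds that integral by the `L¹` norms of the field on the slices `x i = ±R`. By Fubini
these slice norms are integrable functions of `R`, so they are small for arbitrarily large `R`,
while the integrals over the cubes converge to the integral over the whole space. -/

open scoped ENNReal

lemma frequently_atTop_lt_of_lintegral_ne_top {H : ℝ → ℝ≥0∞} (hH : ∫⁻ x, H x ≠ ∞)
    {ε : ℝ≥0∞} (hε : ε ≠ 0) : ∃ᶠ R in atTop, H R < ε := by
  intro h
  obtain ⟨M, hM⟩ := eventually_atTop.1 h
  refine hH (top_le_iff.1 ?_)
  calc ∞ = ∫⁻ x, (Set.Ici M).indicator (fun _ => ε) x := by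
        rw [lintegral_indicator_const measurableSet_Ici, Real.volume_Ici, ENNReal.mul_top hε]
    _ ≤ ∫⁻ x, H x :=
        lintegral_mono <| Set.indicator_le fun y hy => not_lt.1 (hM y hy)

lemma lintegral_lintegral_insertNth {n : ℕ} (i : Fin (n + 1))
    {g : (Fin (n + 1) → ℝ) → ℝ≥0∞} (hg : Measurable g) :
    ∫⁻ t, ∫⁻ y, g (i.insertNth t y) = ∫⁻ x, g x := by
  rw [← ((volume_preserving_piFinSuccAbove (fun _ => ℝ) i).symm _).lintegral_comp hg,
    Measure.volume_eq_prod, lintegral_prod]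
  · rfl
  · exact (hg.comp (MeasurableEquiv.measurable _)).aemeasurable

lemma measurable_lintegral_insertNth {n : ℕ} (i : Fin (n + 1))
    {g : (Fin (n + 1) → ℝ) → ℝ≥0∞} (hg : Measurable g) :
    Measurable fun t => ∫⁻ y, g (i.insertNth t y) :=
  (hg.comp (MeasurableEquiv.piFinSuccAbove (fun _ => ℝ) i).symm.measurable).lintegral_prod_right'

lemma aecover_Icc_neg_const_const {ι : Type*} [Fintype ι] (μ : Measure (ι → ℝ)) :
    AECover μ atTop fun R : ℝ => Set.Icc (fun _ : ι => -R) (fun _ => R) where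
  ae_eventually_mem := ae_of_all _ fun x => by
    filter_upwards [eventually_ge_atTop ‖x‖] with R hR
    exact ⟨fun i => (abs_le.1 ((norm_le_pi_norm x i).trans hR)).1,
      fun i => (abs_le.1 ((norm_le_pi_norm x i).trans hR)).2⟩
  measurableSet _ := measurableSet_Icc

section Divergence

variable {E : Type*} [NormedAddCommGroup E] [NormedSpace ℝ E]

lemma enorm_setIntegral_Icc_divergence_le {n : ℕ}
    {F : Fin (n + 1) → (Fin (n + 1) → ℝ) → E}
    {F' : Fin (n + 1) → (Fin (n + 1) → ℝ) → (Fin (n + 1) → ℝ) →L[ℝ] E}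
    (hF : ∀ i x, HasFDerivAt (F i) (F' i x) x)
    (hdiv : Integrable fun x => ∑ i, F' i x (Pi.single i 1)) {R : ℝ} (hR : 0 ≤ R) :
    ‖∫ x in Set.Icc (fun _ => -R) (fun _ => R), ∑ i, F' i x (Pi.single i 1)‖ₑ ≤
      ∑ i, ((∫⁻ y, ‖F i (i.insertNth R y)‖ₑ) +
        ∫⁻ y, ‖F i (i.insertNth (-R) y)‖ₑ) := by
  have hFc : ∀ i, Continuous (F i) := fun i =>
    continuous_iff_continuousAt.2 fun x => (hF i x).continuousAt
  rw [integral_divergence_of_hasFDerivAt_off_countable' _ _ (fun _ => neg_le_self hR) F F' ∅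
    Set.countable_empty (fun i => (hFc i).continuousOn) (fun x _ i => hF i x) hdiv.integrableOn]
  refine (enorm_sum_le _ _).trans <| Finset.sum_le_sum fun i _ =>
    enorm_sub_le.trans (add_le_add ?_ ?_) <;>
  exact (enorm_integral_le_lintegral_enorm _).trans (setLIntegral_le_lintegral _ _)

theorem integral_divergence_eq_zero_of_integrable {n : ℕ} {F : Fin n → (Fin n → ℝ) → E}
    {F' : Fin n → (Fin n → ℝ) → (Fin n → ℝ) →L[ℝ] E}
    (hF : ∀ i x, HasFDerivAt (F i) (F' i x) x) (hFi : ∀ i, Integrable (F i))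
    (hdiv : Integrable fun x => ∑ i, F' i x (Pi.single i 1)) :
    ∫ x, ∑ i, F' i x (Pi.single i 1) = 0 := by
  cases n with
  | zero => simp
  | succ n =>
  have hF_meas : ∀ i, Measurable fun x => ‖F i x‖ₑ := fun i =>
    (continuous_iff_continuousAt.2 fun x => (hF i x).continuousAt).enorm.measurable
  set G : Fin (n + 1) → ℝ → ℝ≥0∞ := fun i t => ∫⁻ y, ‖F i (i.insertNth t y)‖ₑ
  have hG_meas : ∀ i, Measurable (G i) := fun i => measurable_lintegral_insertNth i (hF_meas i)
  have hH : ∫⁻ R, ∑ i, (G i R + G i (-R)) ≠ ∞ := by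
    rw [lintegral_finsetSum' (f := fun i R => G i R + G i (-R)) _ fun i _ =>
      ((hG_meas i).add ((hG_meas i).comp measurable_neg)).aemeasurable]
    refine ENNReal.sum_ne_top.2 fun i _ => ?_
    rw [lintegral_add_left (hG_meas i),
      (Measure.measurePreserving_neg volume).lintegral_comp (hG_meas i),
      lintegral_lintegral_insertNth i (hF_meas i)]
    exact ENNReal.add_ne_top.2 ⟨(hFi i).2.ne, (hFi i).2.ne⟩
  have hlim := (aecover_Icc_neg_const_const (volume : Measure (Fin (n + 1) → ℝ))
    ).integral_tendsto_of_countably_generated hdiv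
  refine enorm_eq_zero.1 (le_antisymm (le_of_forall_gt_imp_ge_of_dense fun δ hδ => ?_) bot_le)
  refine (isClosed_le continuous_enorm continuous_const).mem_of_frequently_of_tendsto ?_ hlim
  refine ((frequently_atTop_lt_of_lintegral_ne_top hH hδ.ne').and_eventually
    (eventually_ge_atTop 0)).mono ?_
  rintro R ⟨hHR, hR⟩
  exact (enorm_setIntegral_Icc_divergence_le hF hdiv hR).trans hHR.le

end Divergence

theorem integral_sum_pderiv'_eq_zero {d : ℕ} {V : Fin d → EuclideanSpace ℝ (Fin d) → ℝ}
    (hV : ∀ i, Differentiable ℝ (V i)) (hVi : ∀ i, Integrable (V i))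
    (hdiv : Integrable fun x => ∑ i, pderiv' i (V i) x) :
    ∫ x, ∑ i, pderiv' i (V i) x = 0 := by
  let e := (EuclideanSpace.equiv (Fin d) ℝ).symm
  have he : MeasurePreserving e := PiLp.volume_preserving_toLp (Fin d)
  have hemb : MeasurableEmbedding e := e.toHomeomorph.measurableEmbedding
  have hdiv_eq : ∀ y,
      ∑ i, (fderiv ℝ (V i) (e y) ∘L (e : (Fin d → ℝ) →L[ℝ] _)) (Pi.single i 1) =
        ∑ i, pderiv' i (V i) (e y) := fun y => by
    simp [e, pderiv', basisVec]
  rw [← he.integral_comp hemb]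
  simp_rw [← hdiv_eq]
  refine integral_divergence_eq_zero_of_integrable
    (fun i y => (hV i _).hasFDerivAt.comp y e.hasFDerivAt)
    (fun i => (he.integrable_comp_emb hemb).2 (hVi i)) ?_
  simpa only [hdiv_eq, Function.comp_def] using (he.integrable_comp_emb hemb).2 hdiv

lemma ContDiff.pderiv' {d : ℕ} {f : EuclideanSpace ℝ (Fin d) → ℝ} {m n : WithTop ℕ∞}
    (hf : ContDiff ℝ n f) (hmn : m + 1 ≤ n) (i : Fin d) : ContDiff ℝ m (pderiv' i f) :=
  (ContinuousLinearMap.apply ℝ ℝ (basisVec i)).contDiff.comp (hf.fderiv_right hmn)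

section Pderiv

variable {d : ℕ} {x : EuclideanSpace ℝ (Fin d)}

lemma pderiv'_mul {g h : EuclideanSpace ℝ (Fin d) → ℝ} (hg : DifferentiableAt ℝ g x)
    (hh : DifferentiableAt ℝ h x) (i : Fin d) :
    pderiv' i (fun z => g z * h z) x = g x * pderiv' i h x + pderiv' i g x * h x := by
  simp [pderiv', fderiv_fun_mul hg hh, mul_comm]

lemma pderiv'_log {p : EuclideanSpace ℝ (Fin d) → ℝ} (hp : DifferentiableAt ℝ p x)
    (hx : p x ≠ 0) (i : Fin d) :
    pderiv' i (fun y => Real.log (p y)) x = pderiv' i p x / p x := by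
  simp [pderiv', (hp.hasFDerivAt.log hx).fderiv, div_eq_inv_mul]

lemma steinOp_mul_eq_sum_pderiv' {p f : EuclideanSpace ℝ (Fin d) → ℝ}
    (hp : DifferentiableAt ℝ p x) (hx : p x ≠ 0)
    (hf : ∀ i, DifferentiableAt ℝ (pderiv' i f) x) :
    steinOp p f x * p x = ∑ i, pderiv' i (fun z => p z * pderiv' i f z) x := by
  simp only [steinOp, laplacian', pderiv'_log hp hx, pderiv'_mul hp (hf _), add_mul,
    Finset.sum_mul, ← Finset.sum_add_distrib]
  refine Finset.sum_congr rfl fun i _ => ?_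
  field_simp

end Pderiv

theorem stein_identity_general {d : ℕ}
    (p : EuclideanSpace ℝ (Fin d) → ℝ)
    (hp_pos : ∀ x, 0 < p x)
    (hp_smooth : ContDiff ℝ 1 p)
    (f : EuclideanSpace ℝ (Fin d) → ℝ)
    (hf : ContDiff ℝ 2 f)
    -- the vector field `p ∇f` is integrable
    (h_int : ∀ i, Integrable (fun x => p x * pderiv' i f x))
    -- `L_p f` is integrable under `p`
    (h_int_stein : Integrable (fun x => steinOp p f x * p x)) :
    ∫ x, steinOp p f x * p x = 0 := by
  have hp : Differentiable ℝ p := hp_smooth.differentiable one_ne_zero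
  have hf' : ∀ i, Differentiable ℝ (pderiv' i f) := fun i =>
    (hf.pderiv' (m := 1) (by norm_num) i).differentiable one_ne_zero
  have h_div : (fun x => steinOp p f x * p x) =
      fun x => ∑ i, pderiv' i (fun z => p z * pderiv' i f z) x := funext fun x =>
    steinOp_mul_eq_sum_pderiv' (hp x) (hp_pos x).ne' fun i => hf' i x
  rw [h_div] at h_int_stein ⊢
  exact integral_sum_pderiv'_eq_zero (fun i => hp.mul (hf' i)) h_int h_int_stein

/-- **Stein identity** for the Langevin Stein operator: if the vector field `p·∇f`
is integrable, its flux over spheres of radius `R` vanishes as `R → ∞`, and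
`L_p f` is integrable under `p`, then `E_{X∼p}[L_p f(X)] = 0`. -/
theorem stein_identity {d : ℕ}
    (p : EuclideanSpace ℝ (Fin d) → ℝ)
    (hp_pos : ∀ x, 0 < p x)
    (hp_smooth : ContDiff ℝ 1 p)
    (hp_prob : ∫ x, p x = 1)
    (f : EuclideanSpace ℝ (Fin d) → ℝ)
    (hf : ContDiff ℝ 2 f)
    -- the vector field `p ∇f` is integrable
    (h_int : ∀ i, Integrable (fun x => p x * pderiv' i f x))
    -- flux of `p ∇f` through the sphere of radius `R` (outward normal `x/R`) vanishes
    (h_flux : Tendsto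
      (fun R : ℝ =>
        ∫ x in Metric.sphere (0 : EuclideanSpace ℝ (Fin d)) R,
          p x * (∑ i, pderiv' i f x * (R⁻¹ * x i)) ∂(μH[(d : ℝ) - 1]))
      atTop (nhds 0))
    -- `L_p f` is integrable under `p`
    (h_int_stein : Integrable (fun x => steinOp p f x * p x)) :
    ∫ x, steinOp p f x * p x = 0 :=
  stein_identity_general p hp_pos hp_smooth f hf h_int h_int_stein
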